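/- Let $t_1, \ldots, t_d > 0$ and let $F_1, \ldots, F_d$ be the recursively defined $2^{d-1} \times 2^{d-1}$ pairwise anti-commuting self-adjoint unitaries. Then $\|t_1 F_1 \otimes F_1 + \cdots + t_d F_d \otimes F_d\| = t_1 + \cdots + t_d$. -/

import Mathlib

/-!
Each `F j` is a real symmetric involution, so `F j ⊗ F j` is unitary and fixes the vectorised
identity: `(F ⊗ F) vec 1 = vec (F Fᵀ) = vec 1`. The triangle inequality bounds the norm of
`∑ t j • F j ⊗ F j` by `∑ t j`, and `vec 1` is an eigenvector for exactly this eigenvalue.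
-/

open Matrix Kronecker

noncomputable def pauliX : Matrix (Fin 2) (Fin 2) ℂ := !![0, 1; 1, 0]
noncomputable def pauliZ : Matrix (Fin 2) (Fin 2) ℂ := !![1, 0; 0, -1]

/-- The recursively defined matrices `F j ^ [d]` of size `2 ^ (d-1)`:
`F 1 ^ [1] = 1`, `F j ^ [d] = σₓ ⊗ F j ^ [d-1]` for `j < d`, and `F d ^ [d] = σ_z ⊗ I`. -/
noncomputable def Fmat : (d : ℕ) → Fin d → Matrix (Fin (2 ^ (d - 1))) (Fin (2 ^ (d - 1))) ℂ
  | 0 => fun j => j.elim0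
  | 1 => fun _ => 1
  | (d + 2) => fun j =>
    if h : (j : ℕ) < d + 1 then
      Matrix.reindex
        (finProdFinEquiv.trans (finCongr (by rw [show d + 1 - 1 = d from rfl,
          show d + 2 - 1 = d + 1 from rfl, pow_succ]; ring)))
        (finProdFinEquiv.trans (finCongr (by rw [show d + 1 - 1 = d from rfl,
          show d + 2 - 1 = d + 1 from rfl, pow_succ]; ring)))
        (pauliX ⊗ₖ Fmat (d + 1) ⟨j, h⟩)
    else
      Matrix.reindex
        (finProdFinEquiv.trans (finCongr (by rw [show d + 2 - 1 = d + 1 from rfl, pow_succ]; ring)))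
        (finProdFinEquiv.trans (finCongr (by rw [show d + 2 - 1 = d + 1 from rfl, pow_succ]; ring)))
        (pauliZ ⊗ₖ (1 : Matrix (Fin (2 ^ d)) (Fin (2 ^ d)) ℂ))

theorem ContinuousLinearMap.norm_sum_smul_eq_of_forall_apply_eq {ι 𝕜 E : Type*} [RCLike 𝕜]
    [NormedAddCommGroup E] [NormedSpace 𝕜 E] (s : Finset ι) {t : ι → ℝ} (ht : ∀ i ∈ s, 0 ≤ t i)
    {U : ι → E →L[𝕜] E} (hU : ∀ i ∈ s, ‖U i‖ ≤ 1) {v : E} (hv : v ≠ 0)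
    (hfix : ∀ i ∈ s, U i v = v) :
    ‖∑ i ∈ s, (t i : 𝕜) • U i‖ = ∑ i ∈ s, t i := by
  set T := ∑ i ∈ s, (t i : 𝕜) • U i
  have hsum_nonneg : 0 ≤ ∑ i ∈ s, t i := Finset.sum_nonneg ht
  have hTv : T v = ((∑ i ∈ s, t i : ℝ) : 𝕜) • v := by
    simp only [T, _root_.sum_apply, _root_.smul_apply, RCLike.ofReal_sum, Finset.sum_smul]
    exact Finset.sum_congr rfl fun i hi => by rw [hfix i hi]
  apply le_antisymm
  · calc ‖T‖ ≤ ∑ i ∈ s, ‖(t i : 𝕜) • U i‖ := norm_sum_le _ _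
      _ ≤ ∑ i ∈ s, t i := Finset.sum_le_sum fun i hi => by
          rw [norm_smul, RCLike.norm_of_nonneg (ht i hi)]
          exact mul_le_of_le_one_right (ht i hi) (hU i hi)
  · have h := T.le_opNorm v
    rw [hTv, norm_smul, RCLike.norm_of_nonneg hsum_nonneg] at h
    exact le_of_mul_le_mul_right h (norm_pos_iff.mpr hv)

namespace Matrix

variable {R m n : Type*}

theorem IsSymm.kronecker [Mul R] {A : Matrix m m R} {B : Matrix n n R} (hA : A.IsSymm)
    (hB : B.IsSymm) : (A ⊗ₖ B).IsSymm := by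
  rw [IsSymm, ← kroneckerMap_transpose, hA.eq, hB.eq]

theorem IsHermitian.kronecker [CommMagma R] [StarMul R] {A : Matrix m m R} {B : Matrix n n R}
    (hA : A.IsHermitian) (hB : B.IsHermitian) : (A ⊗ₖ B).IsHermitian := by
  rw [IsHermitian, conjTranspose_kronecker, hA.eq, hB.eq]

theorem kronecker_mulVec_vec_one_of_mul_transpose_eq_one [CommSemiring R] [Fintype n]
    [DecidableEq n] {A : Matrix n n R} (hA : A * Aᵀ = 1) : (A ⊗ₖ A) *ᵥ vec 1 = vec 1 := by
  rw [kronecker_mulVec_vec, mul_one, hA]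

end Matrix

theorem isSymm_pauliX : pauliX.IsSymm := by
  ext i j; fin_cases i <;> fin_cases j <;> rfl

theorem isSymm_pauliZ : pauliZ.IsSymm := by
  ext i j; fin_cases i <;> fin_cases j <;> rfl

theorem isHermitian_pauliX : pauliX.IsHermitian := by
  ext i j; fin_cases i <;> fin_cases j <;> simp [pauliX]

theorem isHermitian_pauliZ : pauliZ.IsHermitian := by
  ext i j; fin_cases i <;> fin_cases j <;> simp [pauliZ]

theorem pauliX_mul_self : pauliX * pauliX = 1 := by
  simp [pauliX, one_fin_two]

theorem pauliZ_mul_self : pauliZ * pauliZ = 1 := by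
  simp [pauliZ, one_fin_two]

theorem isSymm_Fmat : ∀ (d : ℕ) (j : Fin d), (Fmat d j).IsSymm
  | 0, j => j.elim0
  | 1, _ => isSymm_one
  | d + 2, j => by
    simp only [Fmat]
    split_ifs with h
    · exact (isSymm_pauliX.kronecker (isSymm_Fmat (d + 1) ⟨j, h⟩)).submatrix _
    · exact (isSymm_pauliZ.kronecker isSymm_one).submatrix _

theorem isHermitian_Fmat : ∀ (d : ℕ) (j : Fin d), (Fmat d j).IsHermitian
  | 0, j => j.elim0
  | 1, _ => isHermitian_one
  | d + 2, j => by
    simp only [Fmat]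
    split_ifs with h
    · exact (isHermitian_pauliX.kronecker (isHermitian_Fmat (d + 1) ⟨j, h⟩)).submatrix _
    · exact (isHermitian_pauliZ.kronecker isHermitian_one).submatrix _

theorem Fmat_mul_self : ∀ (d : ℕ) (j : Fin d), Fmat d j * Fmat d j = 1
  | 0, j => j.elim0
  | 1, _ => mul_one 1
  | d + 2, j => by
    simp only [Fmat]
    split_ifs with h
    · rw [reindex_apply, submatrix_mul_equiv, ← mul_kronecker_mul, pauliX_mul_self,
        Fmat_mul_self (d + 1) ⟨j, h⟩, one_kronecker_one, submatrix_one_equiv]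
    · rw [reindex_apply, submatrix_mul_equiv, ← mul_kronecker_mul, pauliZ_mul_self, one_mul,
        one_kronecker_one, submatrix_one_equiv]

theorem Fmat_mem_unitary (d : ℕ) (j : Fin d) : Fmat d j ∈ unitary _ := by
  rw [Unitary.mem_iff, star_eq_conjTranspose, (isHermitian_Fmat d j).eq, Fmat_mul_self]
  exact ⟨rfl, rfl⟩

theorem Fmat_mul_transpose (d : ℕ) (j : Fin d) : Fmat d j * (Fmat d j)ᵀ = 1 := by
  rw [(isSymm_Fmat d j).eq, Fmat_mul_self]

theorem Fmat_kron_weighted_sum_norm_general (d : ℕ)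
    (t : Fin d → ℝ) (ht : ∀ j, 0 < t j) :
    ‖Matrix.toEuclideanCLM (𝕜 := ℂ)
        ((∑ j : Fin d, (t j : ℂ) • (Fmat d j ⊗ₖ Fmat d j) :
          Matrix (Fin (2 ^ (d - 1)) × Fin (2 ^ (d - 1)))
            (Fin (2 ^ (d - 1)) × Fin (2 ^ (d - 1))) ℂ))‖ = ∑ j, t j := by
  simp only [map_sum, map_smul]
  refine ContinuousLinearMap.norm_sum_smul_eq_of_forall_apply_eq (v := WithLp.toLp 2 (vec 1)) _
    (fun j _ => (ht j).le) (fun j _ => ?_) ?_ (fun j _ => ?_)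
  · exact (CStarRing.norm_of_mem_unitary (Unitary.map_mem _
      (kronecker_mem_unitary (Fmat_mem_unitary d j) (Fmat_mem_unitary d j)))).le
  · obtain ⟨i⟩ : Nonempty (Fin (2 ^ (d - 1))) := inferInstance
    intro h
    simpa using congrFun (congrArg WithLp.ofLp h) (i, i)
  · rw [toEuclideanCLM_toLp, kronecker_mulVec_vec_one_of_mul_transpose_eq_one
      (Fmat_mul_transpose d j)]

/-- For positive reals `t 1, …, t d` and the recursively defined anti-commuting
self-adjoint unitaries `F 1, …, F d`, one has
`‖t 1 • F 1 ⊗ F 1 + ⋯ + t d • F d ⊗ F d‖ = t 1 + ⋯ + t d`. -/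
theorem Fmat_kron_weighted_sum_norm (d : ℕ) (hd : 1 ≤ d)
    (t : Fin d → ℝ) (ht : ∀ j, 0 < t j) :
    ‖Matrix.toEuclideanCLM (𝕜 := ℂ)
        ((∑ j : Fin d, (t j : ℂ) • (Fmat d j ⊗ₖ Fmat d j) :
          Matrix (Fin (2 ^ (d - 1)) × Fin (2 ^ (d - 1)))
            (Fin (2 ^ (d - 1)) × Fin (2 ^ (d - 1))) ℂ))‖ = ∑ j, t j :=
  Fmat_kron_weighted_sum_norm_general d t ht
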